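/- Let S be a commutative ring, 𝔞 an ideal of S, and n ≥ 1 an integer. Let F = Σ_{i≥1} a_i x^i and φ = Σ_{j≥1} b_j x^j be power series over S with zero constant term, and suppose a_i ∈ 𝔞 for all 1 ≤ i < n. Then: (1) for every m with 1 ≤ m < n, the degree-m coefficient of the composite F∘φ lies in 𝔞; and (2) the degree-n coefficient of F∘φ is congruent to a_n · b_1^n modulo 𝔞, i.e. coeff_n(F∘φ) − a_n·(b_1)^n ∈ 𝔞. -/

import Mathlib

/-! The degree-`m` coefficient of `F ∘ φ` is `∑_{i ≤ m} a_i · coeff_m (φ ^ i)`. For `m < n` every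
`a_i` in it lies in `𝔞` (`a_0 = 0`); for `m = n` only the top term survives modulo `𝔞`, and writing
`φ = X ψ` gives `coeff_n (φ ^ n) = ψ(0) ^ n = b_1 ^ n`. -/

open PowerSeries

/-- Substitution of the power series `g` (with zero constant term) into the power
series `f`, i.e. the composite `f ∘ g`. -/
noncomputable def PowerSeries.substComp {S : Type*} [CommRing S]
    (g f : PowerSeries S) : PowerSeries S :=
  PowerSeries.mk fun n =>
    ∑ i ∈ Finset.range (n + 1), PowerSeries.coeff i f * PowerSeries.coeff n (g ^ i)

namespace PowerSeries

variable {S : Type*} [CommRing S]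

theorem coeff_substComp (g f : S⟦X⟧) (m : ℕ) :
    coeff m (substComp g f) = ∑ i ∈ Finset.range (m + 1), coeff i f * coeff m (g ^ i) :=
  coeff_mk _ _

theorem coeff_self_pow_of_constantCoeff_eq_zero {φ : S⟦X⟧} (hφ : constantCoeff φ = 0) (n : ℕ) :
    coeff n (φ ^ n) = coeff 1 φ ^ n := by
  obtain ⟨ψ, rfl⟩ := X_dvd_iff.2 hφ
  have h_coeff_one : coeff 1 (X * ψ) = constantCoeff ψ := by
    rw [coeff_succ_X_mul, coeff_zero_eq_constantCoeff_apply]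
  rw [mul_pow, h_coeff_one, ← map_pow, ← coeff_zero_eq_constantCoeff_apply]
  simpa using coeff_X_pow_mul (ψ ^ n) n 0

theorem sum_coeff_mul_coeff_pow_mem {𝔞 : Ideal S} {f : S⟦X⟧} {k : ℕ}
    (hf : ∀ i < k, coeff i f ∈ 𝔞) (g : S⟦X⟧) (m : ℕ) :
    ∑ i ∈ Finset.range k, coeff i f * coeff m (g ^ i) ∈ 𝔞 :=
  Ideal.sum_mem _ fun i hi => Ideal.mul_mem_right _ _ (hf i (Finset.mem_range.1 hi))

end PowerSeries

theorem coeff_precomp_mem_and_congr_general {S : Type*} [CommRing S] (𝔞 : Ideal S)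
    (n : ℕ)
    (F φ : PowerSeries S)
    (hF0 : PowerSeries.constantCoeff F = 0)
    (hφ0 : PowerSeries.constantCoeff φ = 0)
    (hFlow : ∀ i, 1 ≤ i → i < n → PowerSeries.coeff i F ∈ 𝔞) :
    (∀ m, 1 ≤ m → m < n →
        PowerSeries.coeff m (PowerSeries.substComp φ F) ∈ 𝔞) ∧
      PowerSeries.coeff n (PowerSeries.substComp φ F) -
        PowerSeries.coeff n F * (PowerSeries.coeff 1 φ) ^ n ∈ 𝔞 := by
  have hF_mem : ∀ i < n, coeff i F ∈ 𝔞 := by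
    intro i hi
    rcases Nat.eq_zero_or_pos i with rfl | hi_pos
    · simp [hF0]
    · exact hFlow i hi_pos hi
  refine ⟨fun m _ hm => ?_, ?_⟩
  · rw [coeff_substComp]
    exact sum_coeff_mul_coeff_pow_mem (fun i hi => hF_mem i (by omega)) φ m
  · rw [coeff_substComp, Finset.sum_range_succ, coeff_self_pow_of_constantCoeff_eq_zero hφ0,
      add_sub_cancel_right]
    exact sum_coeff_mul_coeff_pow_mem hF_mem φ n

/-- Coefficient computation from the proof of Lemma 3.2: if the coefficients
`a_i` of `F` lie in `𝔞` for `1 ≤ i < n`, then the coefficients of `F ∘ φ` in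
degrees `1 ≤ m < n` lie in `𝔞`, and its degree-`n` coefficient is congruent to
`a_n · b_1 ^ n` modulo `𝔞`, where `b_1` is the linear coefficient of `φ`. -/
theorem coeff_precomp_mem_and_congr {S : Type*} [CommRing S] (𝔞 : Ideal S)
    (n : ℕ) (hn : 1 ≤ n)
    (F φ : PowerSeries S)
    (hF0 : PowerSeries.constantCoeff F = 0)
    (hφ0 : PowerSeries.constantCoeff φ = 0)
    (hFlow : ∀ i, 1 ≤ i → i < n → PowerSeries.coeff i F ∈ 𝔞) :
    (∀ m, 1 ≤ m → m < n →
        PowerSeries.coeff m (PowerSeries.substComp φ F) ∈ 𝔞) ∧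
      PowerSeries.coeff n (PowerSeries.substComp φ F) -
        PowerSeries.coeff n F * (PowerSeries.coeff 1 φ) ^ n ∈ 𝔞 :=
  coeff_precomp_mem_and_congr_general 𝔞 n F φ hF0 hφ0 hFlow
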